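/- arXiv:2001.11014 — 3 statements merged into one kernel-verified Lean document; each statement's English description precedes it below -/
import Mathlib

section
/- Under the same stationarity conditions with $\theta > 0$ and $\hat{p}_i > 0$, each length is uniquely determined and given by $\ell_i = \frac{\lambda - 2\theta\log 2}{3} + \frac{1}{\log 2} W\!\left(\frac{\theta(\log 2)^2}{\hat{p}_i} 2^{\frac{-\lambda + 2\theta\log 2}{3}}\right)$, where $W$ is the principal Lambert W function. -/
open Finset

/-- The principal branch of the Lambert W function on `[0,∞)`, defined as the
nonnegative solution of `x eˣ = y`. -/
noncomputable def lambertW (y : ℝ) : ℝ :=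
  sInf {x : ℝ | 0 ≤ x ∧ x * Real.exp x = y}

open Real

lemma strictMonoOn_mul_exp : StrictMonoOn (fun x : ℝ => x * exp x) (Set.Ici 0) :=
  fun a ha b _ hab =>
    calc a * exp a ≤ a * exp b := mul_le_mul_of_nonneg_left (exp_le_exp.2 hab.le) ha
      _ < b * exp b := mul_lt_mul_of_pos_right hab (exp_pos b)

lemma lambertW_mul_exp {x : ℝ} (hx : 0 ≤ x) : lambertW (x * exp x) = x := by
  have hsol : {t : ℝ | 0 ≤ t ∧ t * exp t = x * exp x} = {x} := by
    ext t
    refine ⟨fun ⟨ht, heq⟩ => strictMonoOn_mul_exp.injOn ht hx heq, ?_⟩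
    rintro rfl
    exact ⟨hx, rfl⟩
  rw [lambertW, hsol, csInf_singleton]

/-- With `y = (x + c) log b`, the equation becomes `y eʸ = a log b / p · b^c`. -/
lemma eq_of_mul_add_eq_mul_rpow_neg {a b c p x : ℝ} (ha : 0 ≤ a) (hb : 1 < b) (hp : 0 < p)
    (h : p * (x + c) = a * b ^ (-x)) :
    x = -c + 1 / log b * lambertW (a * log b / p * b ^ c) := by
  have hb0 : 0 < b := by linarith
  have hlog : 0 < log b := log_pos hb
  have hbx : b ^ (-x) * b ^ x = 1 := by rw [← rpow_add hb0]; simp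
  set y := (x + c) * log b with hy
  have hy0 : 0 ≤ y := by
    have : 0 ≤ p * (x + c) := h ▸ by positivity
    exact mul_nonneg (nonneg_of_mul_nonneg_right this hp) hlog.le
  have hexp : exp y = b ^ x * b ^ c := by
    rw [← rpow_add hb0, rpow_def_of_pos hb0, hy, mul_comm]
  have hW : y * exp y = a * log b / p * b ^ c := by
    rw [hexp, div_mul_eq_mul_div, eq_div_iff hp.ne', hy]
    linear_combination (log b * b ^ x * b ^ c) * h + a * log b * b ^ c * hbx
  rw [← hW, lambertW_mul_exp hy0, hy]
  field_simp
  ring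

theorem lengths_via_lambertW_general {k : ℕ}
    (phat : Fin k → ℝ) (hp : ∀ i, 0 < phat i)
    (ℓ : Fin k → ℝ) (lam θ EL : ℝ) (hθ : 0 < θ)
    (hELval : EL = (lam + θ * Real.log 2) / 3)
    (hstat : ∀ i, phat i * ℓ i + 2 * phat i * EL - lam * phat i
      - θ * Real.log 2 * (2:ℝ) ^ (-(ℓ i)) = 0) :
    ∀ i, ℓ i = (lam - 2 * θ * Real.log 2) / 3
      + (1 / Real.log 2) *
        lambertW (θ * (Real.log 2)^2 / phat i
          * (2:ℝ) ^ ((-lam + 2 * θ * Real.log 2) / 3)) := by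
  intro i
  have hstat_i : phat i * (ℓ i + (-lam + 2 * θ * log 2) / 3) =
      θ * log 2 * (2:ℝ) ^ (-(ℓ i)) := by
    linear_combination hstat i - 2 * phat i * hELval
  have hθlog : 0 ≤ θ * log 2 := by positivity
  convert eq_of_mul_add_eq_mul_rpow_neg hθlog one_lt_two (hp i) hstat_i using 4 <;> ring

/-- Under the stationarity conditions with `θ > 0` and `p̂ᵢ > 0`, each
codeword length is uniquely determined and given by
`ℓᵢ = (λ − 2θ log 2)/3 + (1/log 2) W(θ(log 2)²/p̂ᵢ · 2^{(−λ + 2θ log 2)/3})`. -/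
theorem lengths_via_lambertW {k : ℕ}
    (phat : Fin k → ℝ) (hp : ∀ i, 0 < phat i)
    (ℓ : Fin k → ℝ) (lam θ EL : ℝ) (hθ : 0 < θ)
    (hEL : EL = ∑ i, phat i * ℓ i)
    (hELval : EL = (lam + θ * Real.log 2) / 3)
    (hstat : ∀ i, phat i * ℓ i + 2 * phat i * EL - lam * phat i
      - θ * Real.log 2 * (2:ℝ) ^ (-(ℓ i)) = 0) :
    ∀ i, ℓ i = (lam - 2 * θ * Real.log 2) / 3
      + (1 / Real.log 2) *
        lambertW (θ * (Real.log 2)^2 / phat i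
          * (2:ℝ) ^ ((-lam + 2 * θ * Real.log 2) / 3)) :=
  lengths_via_lambertW_general phat hp ℓ lam θ EL hθ hELval hstat
end

section
/- If all $k$ symbols are equiprobable, $\hat p_i = 1/k$, then the lengths $\ell_i = \log_2 k$ satisfy Kraft with equality and minimize the age functional $\frac{\mathbb{E}[L^2]}{2\mathbb{E}[L]} + \mathbb{E}[L]$ over all real-valued lengths satisfying $\sum_i 2^{-\ell_i} \le 1$, achieving $\Delta = \frac{3}{2}\log_2 k$. -/
/-!
Jensen's inequality for the convex map `x ↦ 2 ^ x` turns Kraft's inequality into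
`E[L] ≥ log₂ k`, and `E[L²] ≥ E[L]²` gives `Δ ≥ E[L]/2 + E[L]`. Hence
`Δ ≥ (3/2) log₂ k`, with equality at the uniform lengths `log₂ k`.
-/

open Finset

theorem logb_card_le_mean_of_kraft {ι : Type*} [Fintype ι] [Nonempty ι] (ℓ : ι → ℝ)
    (hkraft : ∑ i, (2:ℝ) ^ (-ℓ i) ≤ 1) :
    Real.logb 2 (Fintype.card ι) ≤ (∑ i, ℓ i) / Fintype.card ι := by
  set n : ℝ := (Fintype.card ι : ℝ)
  have hn : 0 < n := by simp [n, Fintype.card_pos]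
  have hjensen := (convexOn_rpow_left (b := 2) two_pos).map_sum_le (t := univ)
    (w := fun _ => 1 / n) (p := fun i => -ℓ i) (fun _ _ => by positivity)
    (by simp [n]) (fun _ _ => Set.mem_univ _)
  have hmean : (2:ℝ) ^ (-((∑ i, ℓ i) / n)) ≤ (2:ℝ) ^ (-Real.logb 2 n) :=
    calc (2:ℝ) ^ (-((∑ i, ℓ i) / n)) = (2:ℝ) ^ (∑ i, (1 / n) • -ℓ i) := by
          simp only [smul_eq_mul, ← mul_sum, sum_neg_distrib]; ring_nf
      _ ≤ ∑ i, (1 / n) • (2:ℝ) ^ (-ℓ i) := hjensen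
      _ = 1 / n * ∑ i, (2:ℝ) ^ (-ℓ i) := by simp only [smul_eq_mul, ← mul_sum]
      _ ≤ 1 / n := mul_le_of_le_one_right (by positivity) hkraft
      _ = (2:ℝ) ^ (-Real.logb 2 n) := by
          rw [Real.rpow_neg zero_le_two, Real.rpow_logb two_pos (by norm_num) hn, one_div]
  linarith [(Real.rpow_le_rpow_left_iff one_lt_two).mp hmean]

theorem three_halves_mul_le_div_two_mul_add {m q : ℝ} (hm : 0 < m) (hq : m ^ 2 ≤ q) :
    3 / 2 * m ≤ q / (2 * m) + m := by
  have : m / 2 ≤ q / (2 * m) := by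
    rw [div_le_div_iff₀ two_pos (by positivity)]
    nlinarith
  linarith

/-- For the uniform pmf on `k ≥ 2` symbols, the lengths `ℓᵢ = log₂ k` satisfy
Kraft with equality, minimize the age functional `E[L²]/(2E[L]) + E[L]` over all
Kraft-feasible nonnegative real-valued lengths, and achieve `Δ = (3/2) log₂ k`. -/
theorem uniform_pmf_optimal_lengths {k : ℕ} (hk : 2 ≤ k)
    (Δ : (Fin k → ℝ) → ℝ)
    (hΔ : ∀ ℓ : Fin k → ℝ,
      Δ ℓ = ((1 / (k:ℝ)) * ∑ i, (ℓ i)^2) / (2 * ((1 / (k:ℝ)) * ∑ i, ℓ i))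
        + (1 / (k:ℝ)) * ∑ i, ℓ i)
    (ℓstar : Fin k → ℝ) (hℓstar : ∀ i, ℓstar i = Real.logb 2 k) :
    (∑ i, (2:ℝ) ^ (-(ℓstar i))) = 1 ∧
    (∀ ℓ : Fin k → ℝ, (∀ i, 0 ≤ ℓ i) → (∑ i, (2:ℝ) ^ (-(ℓ i))) ≤ 1 →
      Δ ℓstar ≤ Δ ℓ) ∧
    Δ ℓstar = (3/2) * Real.logb 2 k := by
  have hk0 : (0:ℝ) < k := by positivity
  have hL : 0 < Real.logb 2 k := Real.logb_pos one_lt_two (by exact_mod_cast hk)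
  have hΔstar : Δ ℓstar = 3 / 2 * Real.logb 2 k := by
    simp only [hΔ, hℓstar, sum_const, card_univ, Fintype.card_fin, nsmul_eq_mul]
    field_simp
    ring
  refine ⟨?_, fun ℓ _ hkraft => ?_, hΔstar⟩
  · simp only [hℓstar, Real.rpow_neg zero_le_two, Real.rpow_logb two_pos (by norm_num) hk0,
      sum_const, card_univ, Fintype.card_fin, nsmul_eq_mul]
    field_simp
  · have : NeZero k := ⟨by omega⟩
    have hmean := logb_card_le_mean_of_kraft ℓ hkraft
    have hsq := sum_div_card_sq_le_sum_sq_div_card (s := univ) (f := ℓ)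
    simp only [Fintype.card_fin, card_univ] at hmean hsq
    rw [hΔstar, hΔ ℓ, one_div_mul_eq_div, one_div_mul_eq_div]
    linarith [three_halves_mul_le_div_two_mul_add (hL.trans_le hmean) hsq]
end

section
/- For a sequence of i.i.d. positive service times $s_1, s_2, \dots$ with finite second moment, the long-term average age $\lim_{T\to\infty} \frac{1}{T}\int_0^T a(t)\,dt$ of a zero-wait update system equals $\frac{\mathbb{E}[S^2]}{2\mathbb{E}[S]} + \mathbb{E}[S]$ almost surely, where over the interval between the $i$-th and $(i+1)$-th deliveries the area under $a(t)$ contributes $\frac{1}{2}s_{i+1}^2 + s_i s_{i+1}$. -/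
/-!
Between consecutive deliveries the age grows with slope one, starting from `a (D n) = s (n - 1)`,
so the area `A n := ∫₀^{D n} a` equals `∑_{i<n} (s i ^ 2 / 2 + s (i - 1) * s i)` and, for
`D n ≤ T ≤ D (n + 1)`, `(∫₀ᵀ a) / T` lies between `A n / D (n + 1)` and `A (n + 1) / D n`.
By the strong law, `D n / n → E[S]` and `A n / n → E[S²] / 2 + E[S]²` almost surely, so both
bounds tend to `(E[S²] / 2 + E[S]²) / E[S]`.
-/

open Finset MeasureTheory ProbabilityTheory Filter Topology

section CesaroAverages

variable {u : ℕ → ℝ} {L : ℝ}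

theorem tendsto_div_natCast_add_iff (d : ℝ) :
    Tendsto (fun n : ℕ => u n / (n + d)) atTop (𝓝 L) ↔
      Tendsto (fun n : ℕ => u n / n) atTop (𝓝 L) := by
  constructor
  · intro h
    have hratio : Tendsto (fun n : ℕ => ((n : ℝ) + d) / n) atTop (𝓝 1) := by
      have h0 := (tendsto_const_div_atTop_nhds_zero_nat d).const_add 1
      rw [add_zero] at h0
      refine h0.congr' ?_
      filter_upwards [eventually_ne_atTop 0] with n hn
      rw [add_div, div_self (Nat.cast_ne_zero.2 hn), add_comm]
    have hne : ∀ᶠ n : ℕ in atTop, (n : ℝ) + d ≠ 0 :=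
      (tendsto_atTop_add_const_right _ d tendsto_natCast_atTop_atTop).eventually_ne_atTop 0
    refine (mul_one L ▸ h.mul hratio).congr' ?_
    filter_upwards [hne] with n hn
    exact div_mul_div_cancel₀ hn
  · intro h
    refine (mul_one L ▸ h.mul (tendsto_natCast_div_add_atTop d)).congr' ?_
    filter_upwards [eventually_ne_atTop 0] with n hn
    exact div_mul_div_cancel₀ (Nat.cast_ne_zero.2 hn)

theorem tendsto_succ_div_natCast_iff :
    Tendsto (fun n : ℕ => u (n + 1) / n) atTop (𝓝 L) ↔
      Tendsto (fun n : ℕ => u n / n) atTop (𝓝 L) := by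
  rw [← tendsto_add_atTop_iff_nat (f := fun n : ℕ => u n / n) 1,
    ← tendsto_div_natCast_add_iff (u := fun n => u (n + 1)) 1]
  push_cast
  rfl

end CesaroAverages

theorem Monotone.exists_mem_Ico_of_tendsto_atTop {α : Type*} [LinearOrder α] [NoMaxOrder α]
    {D : ℕ → α} (hD : Monotone D) (htop : Tendsto D atTop atTop) {N : ℕ} {x : α}
    (hx : D N ≤ x) : ∃ n, N ≤ n ∧ D n ≤ x ∧ x < D (n + 1) := by
  classical
  have hex : ∃ k, x < D (k + 1) := by
    obtain ⟨k, hk⟩ := (htop.eventually_gt_atTop x).exists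
    exact ⟨k, hk.trans_le (hD k.le_succ)⟩
  refine ⟨Nat.find hex, ?_, ?_, Nat.find_spec hex⟩
  · by_contra! h
    exact (Nat.find_spec hex).not_ge (hx.trans' (hD h))
  · cases hk : Nat.find hex with
    | zero => exact (hD (Nat.zero_le N)).trans hx
    | succ k => exact not_lt.1 (Nat.find_min hex (hk ▸ k.lt_succ_self))

theorem tendsto_of_forall_mem_Ico_le_le {α : Type*} [LinearOrder α] [NoMaxOrder α]
    {D : ℕ → α} (hD : Monotone D) (htop : Tendsto D atTop atTop) {f : α → ℝ} {u v : ℕ → ℝ}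
    {L : ℝ} (hu : Tendsto u atTop (𝓝 L)) (hv : Tendsto v atTop (𝓝 L))
    (hf : ∀ᶠ n in atTop, ∀ x, D n ≤ x → x < D (n + 1) → u n ≤ f x ∧ f x ≤ v n) :
    Tendsto f atTop (𝓝 L) := by
  have hblock : ∀ p : ℕ → Prop, (∀ᶠ n in atTop, p n) →
      ∀ᶠ x in atTop, ∃ n, p n ∧ u n ≤ f x ∧ f x ≤ v n := by
    intro p hp
    obtain ⟨N, hN⟩ := eventually_atTop.1 (hp.and hf)
    filter_upwards [eventually_ge_atTop (D N)] with x hx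
    obtain ⟨n, hNn, hn, hxn⟩ := hD.exists_mem_Ico_of_tendsto_atTop htop hx
    exact ⟨n, (hN n hNn).1, (hN n hNn).2 x hn hxn⟩
  refine tendsto_order.2 ⟨fun b hb => ?_, fun b hb => ?_⟩
  · filter_upwards [hblock _ (hu.eventually_const_lt hb)] with x hx
    obtain ⟨n, hbn, hnx, -⟩ := hx
    exact hbn.trans_le hnx
  · filter_upwards [hblock _ (hv.eventually_lt_const hb)] with x hx
    obtain ⟨n, hnb, -, hxn⟩ := hx
    exact hxn.trans_lt hnb

theorem sum_range_two_mul_eq_add (c : ℕ → ℝ) (k : ℕ) :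
    ∑ i ∈ range (2 * k), c i = ∑ j ∈ range k, c (2 * j) + ∑ j ∈ range k, c (2 * j + 1) := by
  induction k with
  | zero => simp
  | succ k ih =>
    rw [show 2 * (k + 1) = 2 * k + 1 + 1 by ring, sum_range_succ, sum_range_succ, ih,
      sum_range_succ, sum_range_succ]
    ring

theorem tendsto_sum_range_div_of_even_odd {c : ℕ → ℝ} (hc : ∀ n, 0 ≤ c n) {L : ℝ}
    (heven : Tendsto (fun k : ℕ => (∑ j ∈ range k, c (2 * j)) / k) atTop (𝓝 L))
    (hodd : Tendsto (fun k : ℕ => (∑ j ∈ range k, c (2 * j + 1)) / k) atTop (𝓝 L)) :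
    Tendsto (fun n : ℕ => (∑ i ∈ range n, c i) / n) atTop (𝓝 L) := by
  set S : ℕ → ℝ := fun n => ∑ i ∈ range n, c i
  have hS : Monotone S := monotone_nat_of_le_succ fun n => by
    simpa only [S, sum_range_succ] using le_add_of_nonneg_right (hc n)
  have hhalf : Tendsto (fun k : ℕ => S (2 * k) / 2 / k) atTop (𝓝 L) := by
    have := (heven.add hodd).div_const 2
    rw [add_self_div_two] at this
    refine this.congr fun k => ?_
    simp only [S, sum_range_two_mul_eq_add, ← add_div, div_right_comm]
  refine tendsto_of_forall_mem_Ico_le_le (D := fun k => 2 * k)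
    (fun _ _ h => Nat.mul_le_mul_left 2 h)
    (tendsto_atTop_mono (fun k => Nat.le_mul_of_pos_left k two_pos) tendsto_id)
    ((tendsto_div_natCast_add_iff 1).2 hhalf) (tendsto_succ_div_natCast_iff.2 hhalf) ?_
  filter_upwards [eventually_ge_atTop 1] with k hk n hkn hnk
  have hk' : (1 : ℝ) ≤ k := by exact_mod_cast hk
  have hn : (2 * k : ℝ) ≤ n := by exact_mod_cast hkn
  have hn' : (n : ℝ) ≤ 2 * k + 2 := by exact_mod_cast (by omega : n ≤ 2 * k + 2)
  have hSn : 0 ≤ S n := sum_nonneg fun i _ => hc i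
  constructor
  · calc S (2 * k) / 2 / (k + 1) = S (2 * k) / (2 * k + 2) := by rw [div_div]; ring_nf
      _ ≤ S n / (2 * k + 2) := by gcongr; exact hS hkn
      _ ≤ S n / n := by gcongr; linarith
  · calc S n / n ≤ S n / (2 * k) := by gcongr
      _ ≤ S (2 * (k + 1)) / (2 * k) := by gcongr; exact hS (by omega)
      _ = S (2 * (k + 1)) / 2 / k := by rw [div_div]

/-- `ageAtDelivery s n = a (D n)`, i.e. `s (n - 1)`, with the convention `s (-1) = 0`. -/
def ageAtDelivery (s : ℕ → ℝ) : ℕ → ℝ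
  | 0 => 0
  | n + 1 => s n

noncomputable def ageArea (s : ℕ → ℝ) (n : ℕ) : ℝ :=
  ∑ i ∈ range n, (s i ^ 2 / 2 + ageAtDelivery s i * s i)

theorem ageAtDelivery_nonneg {s : ℕ → ℝ} (hs : ∀ n, 0 ≤ s n) (n : ℕ) :
    0 ≤ ageAtDelivery s n := by
  cases n with
  | zero => exact le_rfl
  | succ n => exact hs n

theorem ageArea_nonneg {s : ℕ → ℝ} (hs : ∀ n, 0 ≤ s n) (n : ℕ) : 0 ≤ ageArea s n :=
  sum_nonneg fun i _ => add_nonneg (by positivity) (mul_nonneg (ageAtDelivery_nonneg hs i) (hs i))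

theorem ageArea_succ (s : ℕ → ℝ) (n : ℕ) :
    ageArea s (n + 1) = ageArea s n + (s n ^ 2 / 2 + ageAtDelivery s n * s n) :=
  sum_range_succ _ _

theorem ageArea_succ_eq_sum_add_sum (s : ℕ → ℝ) (n : ℕ) :
    ageArea s (n + 1) = ∑ i ∈ range (n + 1), s i ^ 2 / 2 + ∑ i ∈ range n, s i * s (i + 1) := by
  rw [ageArea, sum_add_distrib, sum_range_succ' (fun i => ageAtDelivery s i * s i)]
  simp only [ageAtDelivery, zero_mul, add_zero]

section ZeroWait

variable {s D : ℕ → ℝ} {a : ℝ → ℝ}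

theorem age_eq_of_mem_Ico (hD0 : D 0 = 0) (ha0 : ∀ t, 0 ≤ t → t < D 1 → a t = t)
    (ha : ∀ n t, 1 ≤ n → D n ≤ t → t < D (n + 1) → a t = t - D n + s (n - 1))
    {n : ℕ} {t : ℝ} (hnt : D n ≤ t) (htn : t < D (n + 1)) :
    a t = t - D n + ageAtDelivery s n := by
  cases n with
  | zero => rw [ha0 t (hD0 ▸ hnt) htn, hD0, ageAtDelivery]; ring
  | succ n => exact ha (n + 1) t n.succ_pos hnt htn

theorem integral_age_from_delivery (hD0 : D 0 = 0) (ha0 : ∀ t, 0 ≤ t → t < D 1 → a t = t)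
    (ha : ∀ n t, 1 ≤ n → D n ≤ t → t < D (n + 1) → a t = t - D n + s (n - 1))
    {n : ℕ} {T : ℝ} (hnT : D n ≤ T) (hTn : T ≤ D (n + 1)) :
    IntervalIntegrable a volume (D n) T ∧
      ∫ t in D n..T, a t = (T - D n) ^ 2 / 2 + ageAtDelivery s n * (T - D n) := by
  have heq : Set.EqOn a (fun t => t - D n + ageAtDelivery s n) (Set.Ioo (D n) T) :=
    fun t ht => age_eq_of_mem_Ico hD0 ha0 ha ht.1.le (ht.2.trans_le hTn)
  refine ⟨(Continuous.intervalIntegrable (by fun_prop) _ _).congr_uIoo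
    (Set.uIoo_of_le hnT ▸ heq.symm), ?_⟩
  rw [intervalIntegral.integral_congr_Ioo_of_le hnT heq,
    intervalIntegral.integral_comp_sub_right (fun t => t + ageAtDelivery s n)]
  rw [intervalIntegral.integral_add intervalIntegral.intervalIntegrable_id intervalIntegrable_const,
    integral_id, intervalIntegral.integral_const, smul_eq_mul]
  ring

theorem integral_age_eq_ageArea (hs : ∀ n, 0 ≤ s n) (hD0 : D 0 = 0)
    (hDs : ∀ n, D (n + 1) = D n + s n) (ha0 : ∀ t, 0 ≤ t → t < D 1 → a t = t)
    (ha : ∀ n t, 1 ≤ n → D n ≤ t → t < D (n + 1) → a t = t - D n + s (n - 1)) (n : ℕ) :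
    IntervalIntegrable a volume 0 (D n) ∧ ∫ t in 0..D n, a t = ageArea s n := by
  induction n with
  | zero => simp [hD0, ageArea]
  | succ n ih =>
    have hle : D n ≤ D (n + 1) := by rw [hDs]; linarith [hs n]
    obtain ⟨hint, hval⟩ := integral_age_from_delivery hD0 ha0 ha hle le_rfl
    refine ⟨ih.1.trans hint, ?_⟩
    rw [← intervalIntegral.integral_add_adjacent_intervals ih.1 hint, ih.2, hval, ageArea_succ,
      hDs]
    ring

theorem integral_age_mem_Icc (hs : ∀ n, 0 ≤ s n) (hD0 : D 0 = 0)
    (hDs : ∀ n, D (n + 1) = D n + s n) (ha0 : ∀ t, 0 ≤ t → t < D 1 → a t = t)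
    (ha : ∀ n t, 1 ≤ n → D n ≤ t → t < D (n + 1) → a t = t - D n + s (n - 1))
    {n : ℕ} {T : ℝ} (hnT : D n ≤ T) (hTn : T ≤ D (n + 1)) :
    ∫ t in 0..T, a t ∈ Set.Icc (ageArea s n) (ageArea s (n + 1)) := by
  obtain ⟨hint, hval⟩ := integral_age_eq_ageArea hs hD0 hDs ha0 ha n
  obtain ⟨hint', hval'⟩ := integral_age_from_delivery hD0 ha0 ha hnT hTn
  rw [← intervalIntegral.integral_add_adjacent_intervals hint hint', hval, hval', ageArea_succ]
  have he := ageAtDelivery_nonneg hs n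
  have hx : 0 ≤ T - D n := sub_nonneg.2 hnT
  have hxs : T - D n ≤ s n := by rw [hDs] at hTn; linarith
  constructor
  · have : 0 ≤ (T - D n) ^ 2 / 2 + ageAtDelivery s n * (T - D n) := by positivity
    linarith
  · gcongr

theorem tendsto_integral_age_div (hs : ∀ n, 0 < s n) {m m₂ : ℝ} (hm : 0 < m)
    (h₁ : Tendsto (fun n : ℕ => (∑ i ∈ range n, s i) / n) atTop (𝓝 m))
    (h₂ : Tendsto (fun n : ℕ => (∑ i ∈ range n, s i ^ 2) / n) atTop (𝓝 m₂))
    (h₃ : Tendsto (fun n : ℕ => (∑ i ∈ range n, s i * s (i + 1)) / n) atTop (𝓝 (m ^ 2)))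
    (hD : ∀ n, D n = ∑ i ∈ range n, s i) (ha0 : ∀ t, 0 ≤ t → t < D 1 → a t = t)
    (ha : ∀ n t, 1 ≤ n → D n ≤ t → t < D (n + 1) → a t = t - D n + s (n - 1)) :
    Tendsto (fun T : ℝ => (∫ t in 0..T, a t) / T) atTop (𝓝 (m₂ / (2 * m) + m)) := by
  have hs' : ∀ n, 0 ≤ s n := fun n => (hs n).le
  have hD0 : D 0 = 0 := by simp [hD]
  have hDs : ∀ n, D (n + 1) = D n + s n := fun n => by simp only [hD, sum_range_succ]
  have hDmono : StrictMono D := strictMono_nat_of_lt_succ fun n => by rw [hDs]; linarith [hs n]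
  have hDavg : Tendsto (fun n : ℕ => D n / n) atTop (𝓝 m) := by simpa only [hD] using h₁
  have hDtop : Tendsto D atTop atTop := by
    refine (hDavg.pos_mul_atTop hm tendsto_natCast_atTop_atTop).congr' ?_
    filter_upwards [eventually_ne_atTop 0] with n hn
    exact div_mul_cancel₀ _ (Nat.cast_ne_zero.2 hn)
  have hAavg : Tendsto (fun n : ℕ => ageArea s n / n) atTop (𝓝 (m₂ / 2 + m ^ 2)) := by
    rw [← tendsto_succ_div_natCast_iff]
    refine ((tendsto_succ_div_natCast_iff.2 h₂).div_const 2 |>.add h₃).congr fun n => ?_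
    rw [ageArea_succ_eq_sum_add_sum, ← sum_div]
    ring
  have hlim : (m₂ / 2 + m ^ 2) / m = m₂ / (2 * m) + m := by field_simp
  refine tendsto_of_forall_mem_Ico_le_le hDmono.monotone hDtop
    (u := fun n => ageArea s n / D (n + 1)) (v := fun n => ageArea s (n + 1) / D n) ?_ ?_ ?_
  · refine hlim ▸ (hAavg.div (tendsto_succ_div_natCast_iff.2 hDavg) hm.ne').congr' ?_
    filter_upwards [eventually_ne_atTop 0] with n hn
    exact div_div_div_cancel_right₀ (Nat.cast_ne_zero.2 hn) _ _
  · refine hlim ▸ ((tendsto_succ_div_natCast_iff.2 hAavg).div hDavg hm.ne').congr' ?_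
    filter_upwards [eventually_ne_atTop 0] with n hn
    exact div_div_div_cancel_right₀ (Nat.cast_ne_zero.2 hn) _ _
  filter_upwards [eventually_ge_atTop 1] with n hn T hnT hTn
  have hDn : 0 < D n := (hDmono.monotone hn).trans_lt' (by simpa [hDs, hD0] using hs 0)
  obtain ⟨hlo, hhi⟩ := integral_age_mem_Icc hs' hD0 hDs ha0 ha hnT hTn.le
  have hT : 0 < T := hDn.trans_le hnT
  constructor
  · calc ageArea s n / D (n + 1) ≤ ageArea s n / T :=
          div_le_div_of_nonneg_left (ageArea_nonneg hs' n) hT hTn.le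
      _ ≤ (∫ t in 0..T, a t) / T := by gcongr
  · calc (∫ t in 0..T, a t) / T ≤ ageArea s (n + 1) / T := by gcongr
      _ ≤ ageArea s (n + 1) / D n := div_le_div_of_nonneg_left (ageArea_nonneg hs' _) hDn hnT

end ZeroWait

section IndependentProducts

variable {Ω : Type*} [MeasurableSpace Ω] {μ : Measure Ω} {s : ℕ → Ω → ℝ}

theorem identDistrib_mul_of_iIndepFun [IsFiniteMeasure μ] (hmeas : ∀ n, Measurable (s n))
    (hindep : iIndepFun s μ) (hident : ∀ n, IdentDistrib (s n) (s 0) μ μ) {i j k l : ℕ}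
    (hij : i ≠ j) (hkl : k ≠ l) :
    IdentDistrib (fun ω => s i ω * s j ω) (fun ω => s k ω * s l ω) μ μ := by
  have hlaw : ∀ p q, p ≠ q →
      μ.map (fun ω => (s p ω, s q ω)) = (μ.map (s 0)).prod (μ.map (s 0)) := by
    intro p q hpq
    rw [(indepFun_iff_map_prod_eq_prod_map_map (hmeas p).aemeasurable
      (hmeas q).aemeasurable).1 (hindep.indepFun hpq), (hident p).map_eq, (hident q).map_eq]
  have hpair : IdentDistrib (fun ω => (s i ω, s j ω)) (fun ω => (s k ω, s l ω)) μ μ :=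
    ⟨((hmeas i).prodMk (hmeas j)).aemeasurable, ((hmeas k).prodMk (hmeas l)).aemeasurable,
      by rw [hlaw i j hij, hlaw k l hkl]⟩
  exact hpair.comp measurable_mul

theorem integral_mul_of_iIndepFun (hmeas : ∀ n, Measurable (s n)) (hindep : iIndepFun s μ)
    (hident : ∀ n, IdentDistrib (s n) (s 0) μ μ) {i j : ℕ} (hij : i ≠ j) :
    ∫ ω, s i ω * s j ω ∂μ = (∫ ω, s 0 ω ∂μ) ^ 2 := by
  rw [(hindep.indepFun hij).integral_fun_mul_eq_mul_integral (hmeas i).aestronglyMeasurable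
    (hmeas j).aestronglyMeasurable, (hident i).integral_eq, (hident j).integral_eq, sq]

/-- The products `s i * s (i + 1)` are not pairwise independent, but those with indices of
equal parity are, so the strong law applies to the even and the odd ones separately. -/
theorem ae_tendsto_sum_range_mul_succ_div [IsFiniteMeasure μ] (hmeas : ∀ n, Measurable (s n))
    (hindep : iIndepFun s μ) (hident : ∀ n, IdentDistrib (s n) (s 0) μ μ)
    (hnonneg : ∀ n ω, 0 ≤ s n ω) (hint : Integrable (s 0) μ) :
    ∀ᵐ ω ∂μ, Tendsto (fun n : ℕ => (∑ i ∈ range n, s i ω * s (i + 1) ω) / n) atTop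
      (𝓝 ((∫ ω, s 0 ω ∂μ) ^ 2)) := by
  have hint01 : Integrable (fun ω => s 0 ω * s 1 ω) μ :=
    (hindep.indepFun zero_ne_one).integrable_mul hint ((hident 1).integrable_iff.2 hint)
  have hparity : ∀ r, ∀ᵐ ω ∂μ, Tendsto
      (fun k : ℕ => (∑ j ∈ range k, s (2 * j + r) ω * s (2 * j + r + 1) ω) / k) atTop
      (𝓝 ((∫ ω, s 0 ω ∂μ) ^ 2)) := by
    intro r
    have hid : ∀ k, IdentDistrib (fun ω => s (2 * k + r) ω * s (2 * k + r + 1) ω)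
        (fun ω => s 0 ω * s 1 ω) μ μ := fun k =>
      identDistrib_mul_of_iIndepFun hmeas hindep hident (by omega) zero_ne_one
    have := strong_law_ae_real (fun k ω => s (2 * k + r) ω * s (2 * k + r + 1) ω)
      ((hid 0).integrable_iff.2 hint01)
      (fun i j hij => hindep.indepFun_mul_mul hmeas _ _ _ _ (by omega) (by omega) (by omega)
        (by omega))
      (fun k => (hid k).trans (hid 0).symm)
    rwa [integral_mul_of_iIndepFun hmeas hindep hident (by omega)] at this
  filter_upwards [hparity 0, hparity 1] with ω heven hodd
  exact tendsto_sum_range_div_of_even_odd (fun i => mul_nonneg (hnonneg i ω) (hnonneg _ ω))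
    heven hodd

end IndependentProducts

/-- For i.i.d. positive service times `s₀, s₁, …` with finite second moment in a
zero-wait update system, the long-term average age
`(1/T)∫₀ᵀ a(t) dt` converges almost surely to `E[S²]/(2E[S]) + E[S]`.
Here `D n = s₀ + ⋯ + s_{n-1}` is the `n`-th delivery time; on `[D n, D (n+1))`
the age is `a(t) = t − D n + s_{n-1}` (and `a(t) = t` before the first
delivery), so the interval between consecutive deliveries contributes area
`½ s_{i+1}² + s_i s_{i+1}`. -/
theorem long_term_average_age {Ω : Type*} [MeasurableSpace Ω]
    (μ : Measure Ω) [IsProbabilityMeasure μ]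
    (s : ℕ → Ω → ℝ)
    (hmeas : ∀ n, Measurable (s n))
    (hindep : iIndepFun s μ)
    (hident : ∀ n, IdentDistrib (s n) (s 0) μ μ)
    (hpos : ∀ n ω, 0 < s n ω)
    (hmom2 : Integrable (fun ω => (s 0 ω)^2) μ)
    (D : Ω → ℕ → ℝ) (hD : ∀ ω n, D ω n = ∑ i ∈ Finset.range n, s i ω)
    (a : Ω → ℝ → ℝ)
    (ha0 : ∀ ω t, 0 ≤ t → t < D ω 1 → a ω t = t)
    (ha : ∀ ω n t, 1 ≤ n → D ω n ≤ t → t < D ω (n + 1) →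
      a ω t = t - D ω n + s (n - 1) ω) :
    ∀ᵐ ω ∂μ, Tendsto (fun T : ℝ => (∫ t in (0:ℝ)..T, a ω t) / T) atTop
      (nhds ((∫ ω', (s 0 ω')^2 ∂μ) / (2 * ∫ ω', s 0 ω' ∂μ)
        + ∫ ω', s 0 ω' ∂μ)) := by
  have hint : Integrable (s 0) μ :=
    ((memLp_two_iff_integrable_sq (hmeas 0).aestronglyMeasurable).2 hmom2).integrable one_le_two
  have hmean : 0 < ∫ ω, s 0 ω ∂μ := by
    rw [integral_pos_iff_support_of_nonneg (fun ω => (hpos 0 ω).le) hint,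
      Function.support_eq_univ fun ω => (hpos 0 ω).ne']
    simp
  have hslln := strong_law_ae_real s hint (fun i j hij => hindep.indepFun hij) hident
  have hslln_sq := strong_law_ae_real (fun n ω => s n ω ^ 2) hmom2
    (fun i j hij => (hindep.indepFun hij).comp (measurable_id.pow_const 2)
      (measurable_id.pow_const 2))
    (fun n => (hident n).comp (measurable_id.pow_const 2))
  filter_upwards [hslln, hslln_sq, ae_tendsto_sum_range_mul_succ_div hmeas hindep hident
    (fun n ω => (hpos n ω).le) hint] with ω h₁ h₂ h₃
  exact tendsto_integral_age_div (fun n => hpos n ω) hmean h₁ h₂ h₃ (hD ω) (ha0 ω) (ha ω)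
end
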